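/- arXiv:2603.00658 — 2 statements merged into one kernel-verified Lean document; each statement's English description precedes it below -/
import Mathlib

section
/- A real number x ∈ [0,1] belongs to P_F if and only if x admits a hexadecimal expansion x = Σ_{n≥1} c_n · 16^(-n) with c_n ∈ {a_n, b_n} for every n ≥ 1, where a_n = p_n mod 16 and b_n = (a_n + 8) mod 16. -/
open MeasureTheory Set Filter

/-- `pr n` is the `n`-th prime, `pr 1 = 2`, `pr 2 = 3`, ... -/
noncomputable def pr (n : ℕ) : ℕ := Nat.nth Nat.Prime (n - 1)

/-- `pa n = p_n mod 16`. -/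
noncomputable def pa (n : ℕ) : ℕ := pr n % 16

/-- `pb n = (pa n + 8) mod 16`. -/
noncomputable def pb (n : ℕ) : ℕ := (pa n + 8) % 16

/-- The left endpoint of the basic interval coded by the digit word `σ`. -/
noncomputable def lEnd {n : ℕ} (σ : Fin n → ℕ) : ℝ :=
  ∑ i : Fin n, (σ i : ℝ) / 16 ^ (i.1 + 1)

/-- The `n`-th stage of the prime fractal construction: the union of the basic
intervals of level `n`, coded by words whose `i`-th digit is `pa (i+1)` or `pb (i+1)`. -/
noncomputable def F (n : ℕ) : Set ℝ :=
  ⋃ σ ∈ {σ : Fin n → ℕ | ∀ i : Fin n, σ i = pa (i.1 + 1) ∨ σ i = pb (i.1 + 1)},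
    Set.Icc (lEnd σ) (lEnd σ + (16 : ℝ) ^ (-(n : ℤ)))

/-- The prime fractal set. -/
noncomputable def PF : Set ℝ := ⋂ n, F n

/-!
Both sides say that `x` lies in the basic interval `[s_n, s_n + 16⁻ⁿ]` of some admissible
digit sequence at every level `n`, where `s_n` is the `n`-th partial sum. For a single sequence
this is equivalent to `x` being the sum of its series, since the basic intervals of a sequence
with digits `≤ 15` are nested. The only difficulty is that membership in each `F n` provides a
possibly different sequence for each `n`; as the admissible sequences form a compact space and
the sets of sequences whose `n`-th interval contains `x` are closed and decreasing, one sequence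
works for all `n`.
-/

open Topology

namespace PrimeFractal

/-- Digits are indexed from `0`: the digit `c j` has weight `16 ^ (-(j + 1))`. -/
noncomputable def digitSum (c : ℕ → ℕ) (n : ℕ) : ℝ :=
  ∑ j ∈ Finset.range n, (c j : ℝ) / 16 ^ (j + 1)

noncomputable def digitInterval (c : ℕ → ℕ) (n : ℕ) : Set ℝ :=
  Icc (digitSum c n) (digitSum c n + 1 / 16 ^ n)

def digits (j : ℕ) : Set ℕ := {pa (j + 1), pb (j + 1)}

lemma digits_subset_Iic (j : ℕ) : digits j ⊆ Iic 15 := by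
  have hpa : pa (j + 1) < 16 := Nat.mod_lt _ (by norm_num)
  have hpb : pb (j + 1) < 16 := Nat.mod_lt _ (by norm_num)
  rintro d (rfl | rfl) <;> simp only [mem_Iic] <;> omega

lemma digitSum_zero (c : ℕ → ℕ) : digitSum c 0 = 0 := Finset.sum_range_zero _

lemma digitSum_succ (c : ℕ → ℕ) (n : ℕ) :
    digitSum c (n + 1) = digitSum c n + (c n : ℝ) / 16 ^ (n + 1) :=
  Finset.sum_range_succ _ _

lemma digitSum_mem_digitInterval (c : ℕ → ℕ) (n : ℕ) : digitSum c n ∈ digitInterval c n :=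
  left_mem_Icc.2 (le_add_of_nonneg_right (by positivity))

lemma lEnd_eq_digitSum {n : ℕ} (c : ℕ → ℕ) : lEnd (fun i : Fin n => c i) = digitSum c n :=
  Fin.sum_univ_eq_sum_range (fun j => (c j : ℝ) / 16 ^ (j + 1)) n

lemma continuous_digitSum (n : ℕ) : Continuous fun c : ℕ → ℕ => digitSum c n := by
  unfold digitSum
  fun_prop

lemma isClosed_setOf_mem_digitInterval (x : ℝ) (n : ℕ) :
    IsClosed {c : ℕ → ℕ | x ∈ digitInterval c n} :=
  (isClosed_le (continuous_digitSum n) continuous_const).inter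
    (isClosed_le continuous_const ((continuous_digitSum n).add continuous_const))

variable {c : ℕ → ℕ}

lemma digitInterval_antitone (hc : ∀ j, c j ≤ 15) : Antitone (digitInterval c) := by
  refine antitone_nat_of_succ_le fun n => Icc_subset_Icc ?_ ?_
  · rw [digitSum_succ]
    exact le_add_of_nonneg_right (by positivity)
  · have hcn : (c n : ℝ) ≤ 15 := by exact_mod_cast hc n
    have h16 : (15 : ℝ) / 16 ^ (n + 1) + 1 / 16 ^ (n + 1) = 1 / 16 ^ n := by
      rw [pow_succ]; field_simp; norm_num
    have hdigit : (c n : ℝ) / 16 ^ (n + 1) ≤ 15 / 16 ^ (n + 1) := by gcongr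
    rw [digitSum_succ, ← h16]
    linarith

lemma summable_digits (hc : ∀ j, c j ≤ 15) : Summable fun j => (c j : ℝ) / 16 ^ (j + 1) := by
  refine summable_of_sum_range_le (c := 1) (fun j => by positivity) fun n => ?_
  have h := digitInterval_antitone hc (Nat.zero_le n) (digitSum_mem_digitInterval c n)
  change digitSum c n ≤ 1
  simpa [digitInterval, digitSum_zero] using h.2

lemma hasSum_iff_forall_mem_digitInterval (hc : ∀ j, c j ≤ 15) {x : ℝ} :
    HasSum (fun j => (c j : ℝ) / 16 ^ (j + 1)) x ↔ ∀ n, x ∈ digitInterval c n := by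
  refine ⟨fun h n => isClosed_Icc.mem_of_tendsto h.tendsto_sum_nat ?_, fun hx => ?_⟩
  · exact eventually_atTop.2
      ⟨n, fun k hk => digitInterval_antitone hc hk (digitSum_mem_digitInterval c k)⟩
  · rw [hasSum_iff_tendsto_nat_of_nonneg (fun j => by positivity)]
    have hlow : Tendsto (fun n : ℕ => x - 1 / 16 ^ n) atTop (𝓝 x) := by
      have h16 : Tendsto (fun n : ℕ => (16 : ℝ) ^ n) atTop atTop :=
        tendsto_pow_atTop_atTop_of_one_lt (by norm_num)
      simpa using tendsto_const_nhds.sub (tendsto_inv_atTop_zero.comp h16)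
    exact tendsto_of_tendsto_of_tendsto_of_le_of_le hlow tendsto_const_nhds
      (fun n => sub_le_iff_le_add.2 (hx n).2) (fun n => (hx n).1)

theorem exists_forall_mem_digitInterval {D : ℕ → Set ℕ} (hD : ∀ j, D j ⊆ Iic 15) {x : ℝ}
    (hx : ∀ n, ∃ c ∈ univ.pi D, x ∈ digitInterval c n) :
    ∃ c ∈ univ.pi D, ∀ n, x ∈ digitInterval c n := by
  have hcompact : IsCompact (univ.pi D) :=
    isCompact_univ_pi fun j => ((finite_Iic 15).subset (hD j)).isCompact
  have hclosed : IsClosed (univ.pi D) := isClosed_set_pi fun _ _ => isClosed_discrete _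
  set t : ℕ → Set (ℕ → ℕ) := fun n => univ.pi D ∩ {c | x ∈ digitInterval c n}
  have hnested : ∀ n, t (n + 1) ⊆ t n := fun n c ⟨hc, hxc⟩ =>
    ⟨hc, digitInterval_antitone (fun j => hD j (hc j (mem_univ j))) n.le_succ hxc⟩
  obtain ⟨c, hc⟩ :=
    IsCompact.nonempty_iInter_of_sequence_nonempty_isCompact_isClosed t hnested hx
      (hcompact.inter_right (isClosed_setOf_mem_digitInterval x 0))
      (fun n => hclosed.inter (isClosed_setOf_mem_digitInterval x n))
  rw [mem_iInter] at hc
  exact ⟨c, (hc 0).1, fun n => (hc n).2⟩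

lemma mem_F_iff {n : ℕ} {x : ℝ} :
    x ∈ F n ↔ ∃ c ∈ univ.pi digits, x ∈ digitInterval c n := by
  simp only [F, mem_iUnion, mem_ofPred_eq, exists_prop, zpow_neg, zpow_natCast,
    ← one_div]
  constructor
  · rintro ⟨σ, hσ, hx⟩
    set c : ℕ → ℕ := fun j => if h : j < n then σ ⟨j, h⟩ else pa (j + 1)
    have hσc : lEnd σ = digitSum c n := by
      rw [← lEnd_eq_digitSum]
      simp [c]
    refine ⟨c, fun j _ => ?_, by rwa [digitInterval, ← hσc]⟩
    by_cases h : j < n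
    · simpa [c, h, digits] using hσ ⟨j, h⟩
    · simp [c, h, digits]
  · rintro ⟨c, hc, hx⟩
    exact ⟨fun i => c i, fun i => hc i (mem_univ _), by rwa [lEnd_eq_digitSum]⟩

lemma mem_PF_iff {x : ℝ} :
    x ∈ PF ↔ ∃ c ∈ univ.pi digits, ∀ n, x ∈ digitInterval c n := by
  simp only [PF, mem_iInter, mem_F_iff]
  refine ⟨exists_forall_mem_digitInterval digits_subset_Iic, ?_⟩
  rintro ⟨c, hc, hx⟩ n
  exact ⟨c, hc, hx n⟩

end PrimeFractal

open PrimeFractal in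
/-- A number `x ∈ [0,1]` belongs to `P_F` iff it admits a hexadecimal expansion
`x = Σ_{n≥1} c_n 16^(-n)` with `c_n ∈ {pa n, pb n}` for every `n ≥ 1`. -/
theorem stmt8 : ∀ x ∈ Set.Icc (0 : ℝ) 1,
    x ∈ PF ↔ ∃ c : ℕ → ℕ, (∀ n : ℕ, 1 ≤ n → c n = pa n ∨ c n = pb n) ∧
      x = ∑' n : ℕ, (c (n + 1) : ℝ) / 16 ^ (n + 1) := by
  intro x _
  rw [mem_PF_iff]
  constructor
  · rintro ⟨c, hc, hx⟩
    have hc15 : ∀ j, c j ≤ 15 := fun j => digits_subset_Iic j (hc j (mem_univ j))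
    refine ⟨fun n => c (n - 1), fun n hn => ?_, ?_⟩
    · obtain ⟨j, rfl⟩ := Nat.exists_eq_add_of_le' hn
      exact hc j (mem_univ j)
    · exact ((hasSum_iff_forall_mem_digitInterval hc15).2 hx).tsum_eq.symm
  · rintro ⟨c, hc, rfl⟩
    have hdigits : (fun j => c (j + 1)) ∈ univ.pi digits := fun j _ => hc (j + 1) j.succ_pos
    have hc15 : ∀ j, c (j + 1) ≤ 15 := fun j => digits_subset_Iic j (hdigits j (mem_univ j))
    exact ⟨_, hdigits,
      (hasSum_iff_forall_mem_digitInterval hc15).1 (summable_digits hc15).hasSum⟩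
end

section
/- For ε_n = 16^(-n), the minimal number of closed intervals of length ε_n needed to cover P_F equals exactly 2^n. -/
open MeasureTheory Set Filter

/-- The minimal number of closed intervals of length `ε` needed to cover `s`. -/
noncomputable def coverNum (s : Set ℝ) (ε : ℝ) : ℕ :=
  sInf {k : ℕ | ∃ t : Finset ℝ, t.card = k ∧ s ⊆ ⋃ x ∈ t, Set.Icc x (x + ε)}

/-!
The stage `F n` is a union of at most `2 ^ n` intervals of length `16 ^ (-n)`, so `2 ^ n`
intervals suffice. Conversely, every sequence of choices between the digits `pa (j + 1)` and
`pb (j + 1)` is a base-16 expansion of a point of `PF`. If two choice sequences first differ at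
a place `k < n`, the two digits there differ by `8`, while the tails after place `k` differ by at
most one unit of that place; so the points are at least `7 * 16 ^ (-(k + 1)) > 16 ^ (-n)` apart.
The `2 ^ n` choice words of length `n` thus give `2 ^ n` points of `PF`, no two of which fit in
one interval of length `16 ^ (-n)`.
-/

namespace Real

variable {b : ℕ}

theorem ofDigits_mem_Icc (a : ℕ → Fin b) (n : ℕ) :
    ofDigits a ∈ Icc (∑ i ∈ Finset.range n, ofDigitsTerm a i)
      ((∑ i ∈ Finset.range n, ofDigitsTerm a i) + ((b : ℝ) ^ n)⁻¹) := by
  rw [ofDigits_eq_sum_add_ofDigits a n]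
  have htail := ofDigits_nonneg fun i ↦ a (i + n)
  refine ⟨le_add_of_nonneg_right (by positivity), ?_⟩
  gcongr
  exact mul_le_of_le_one_right (by positivity) (ofDigits_le_one _)

theorem sub_one_mul_le_abs_ofDigits_sub {x y : ℕ → Fin b} {k : ℕ} (hxy : ∀ i < k, x i = y i) :
    (|(x k : ℝ) - y k| - 1) * ((b : ℝ) ^ (k + 1))⁻¹ ≤ |ofDigits x - ofDigits y| := by
  have hx := ofDigits_mem_Icc x (k + 1)
  have hy := ofDigits_mem_Icc y (k + 1)
  have hhead : ∑ i ∈ Finset.range k, ofDigitsTerm x i = ∑ i ∈ Finset.range k, ofDigitsTerm y i :=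
    Finset.sum_congr rfl fun i hi ↦ by simp only [ofDigitsTerm, hxy i (Finset.mem_range.mp hi)]
  rw [Finset.sum_range_succ, hhead] at hx
  rw [Finset.sum_range_succ] at hy
  simp only [ofDigitsTerm, mem_Icc] at hx hy
  set B := ((b : ℝ) ^ (k + 1))⁻¹
  have hB : 0 ≤ B := by positivity
  have hclose : |(ofDigits x - ofDigits y) - ((x k : ℝ) - y k) * B| ≤ B :=
    abs_sub_le_iff.mpr ⟨by linarith, by linarith⟩
  calc (|(x k : ℝ) - y k| - 1) * B = |((x k : ℝ) - y k) * B| - B := by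
        rw [abs_mul, abs_of_nonneg hB]; ring
    _ ≤ |ofDigits x - ofDigits y| := by
        linarith [abs_sub_abs_le_abs_sub (((x k : ℝ) - y k) * B) (ofDigits x - ofDigits y),
          abs_sub_comm (((x k : ℝ) - y k) * B) (ofDigits x - ofDigits y)]

end Real

lemma coverNum_le_card {s : Set ℝ} {ε : ℝ} {t : Finset ℝ}
    (h : s ⊆ ⋃ x ∈ t, Icc x (x + ε)) : coverNum s ε ≤ t.card :=
  Nat.sInf_le ⟨t, rfl, h⟩

-- Pigeonhole: an interval of length `ε` holds at most one point of an `ε`-separated family.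
lemma card_le_card_of_separated {ι : Type*} {S : Finset ι} {f : ι → ℝ} {ε : ℝ} {t : Finset ℝ}
    (hsep : (S : Set ι).Pairwise fun i j ↦ ε < |f i - f j|)
    (hcover : ∀ i ∈ S, f i ∈ ⋃ x ∈ t, Icc x (x + ε)) : S.card ≤ t.card := by
  choose! c hct hc using fun i hi ↦ mem_iUnion₂.mp (hcover i hi)
  refine Finset.card_le_card_of_injOn c hct fun i hi j hj hij ↦ by_contra fun hne ↦ ?_
  have hi' := hc i hi
  have hj' := hc j hj
  rw [hij] at hi'
  exact (hsep hi hj hne).not_ge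
    (abs_sub_le_iff.mpr ⟨by linarith [hi'.2, hj'.1], by linarith [hi'.1, hj'.2]⟩)

lemma le_coverNum_of_separated {ι : Type*} {s : Set ℝ} {ε : ℝ} {S : Finset ι} {f : ι → ℝ}
    (hfin : ∃ t : Finset ℝ, s ⊆ ⋃ x ∈ t, Icc x (x + ε)) (hmem : ∀ i ∈ S, f i ∈ s)
    (hsep : (S : Set ι).Pairwise fun i j ↦ ε < |f i - f j|) : S.card ≤ coverNum s ε := by
  obtain ⟨t, ht⟩ := hfin
  exact le_csInf ⟨t.card, t, rfl, ht⟩ fun k ⟨u, hu, hcov⟩ ↦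
    hu ▸ card_le_card_of_separated hsep fun i hi ↦ hcov (hmem i hi)

lemma pa_lt (k : ℕ) : pa k < 16 := Nat.mod_lt _ (by norm_num)

lemma pb_lt (k : ℕ) : pb k < 16 := Nat.mod_lt _ (by norm_num)

lemma abs_pa_sub_pb (k : ℕ) : |(pa k : ℝ) - pb k| = 8 := by
  have : pa k + 8 = pb k ∨ pb k + 8 = pa k := by unfold pb pa; omega
  rcases this with h | h <;> rw [← h] <;> norm_num

noncomputable def words (n : ℕ) : Finset (Fin n → ℕ) :=
  Fintype.piFinset fun i ↦ {pa (i + 1), pb (i + 1)}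

lemma card_words_le (n : ℕ) : (words n).card ≤ 2 ^ n := by
  rw [words, Fintype.card_piFinset]
  calc _ ≤ 2 ^ (Finset.univ : Finset (Fin n)).card :=
        Finset.prod_le_pow_card _ _ _ fun _ _ ↦ Finset.card_le_two
    _ = 2 ^ n := by simp

lemma PF_subset_biUnion_image_lEnd (n : ℕ) :
    PF ⊆ ⋃ x ∈ (words n).image lEnd, Icc x (x + (16 : ℝ) ^ (-(n : ℤ))) := by
  rw [Finset.set_biUnion_finset_image]
  refine (iInter_subset F n).trans ?_
  simp [F, words, Fintype.mem_piFinset]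

noncomputable def choiceDigit (j : ℕ) (c : Bool) : Fin 16 :=
  if c then ⟨pa (j + 1), pa_lt _⟩ else ⟨pb (j + 1), pb_lt _⟩

lemma choiceDigit_val (j : ℕ) (c : Bool) :
    (choiceDigit j c : ℕ) = pa (j + 1) ∨ (choiceDigit j c : ℕ) = pb (j + 1) := by
  cases c <;> simp [choiceDigit]

lemma abs_choiceDigit_sub (j : ℕ) {c c' : Bool} (h : c ≠ c') :
    |(choiceDigit j c : ℝ) - choiceDigit j c'| = 8 := by
  cases c <;> cases c' <;> simp_all [choiceDigit, abs_pa_sub_pb, abs_sub_comm]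

noncomputable def pathPoint (c : ℕ → Bool) : ℝ :=
  Real.ofDigits fun j ↦ choiceDigit j (c j)

lemma pathPoint_mem_PF (c : ℕ → Bool) : pathPoint c ∈ PF := by
  refine mem_iInter.mpr fun m ↦ mem_iUnion₂.mpr
    ⟨fun i ↦ choiceDigit i (c i), fun i ↦ choiceDigit_val i _, ?_⟩
  have hlEnd : lEnd (fun i : Fin m ↦ (choiceDigit i (c i) : ℕ)) =
      ∑ i ∈ Finset.range m, Real.ofDigitsTerm (fun j ↦ choiceDigit j (c j)) i := by
    rw [lEnd, Fin.sum_univ_eq_sum_range (fun j ↦ ((choiceDigit j (c j) : ℕ) : ℝ) / 16 ^ (j + 1))]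
    simp [Real.ofDigitsTerm, div_eq_mul_inv]
  rw [hlEnd, zpow_neg, zpow_natCast]
  exact_mod_cast Real.ofDigits_mem_Icc _ m

lemma pow_neg_lt_abs_pathPoint_sub {c c' : ℕ → Bool} {n : ℕ} (hne : c ≠ c')
    (htail : ∀ j ≥ n, c j = c' j) : (16 : ℝ) ^ (-(n : ℤ)) < |pathPoint c - pathPoint c'| := by
  have hex : ∃ k, c k ≠ c' k := Function.ne_iff.mp hne
  set k := Nat.find hex
  have hk : c k ≠ c' k := Nat.find_spec hex
  have hkn : k < n := not_le.mp fun h ↦ hk (htail k h)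
  have hsep := Real.sub_one_mul_le_abs_ofDigits_sub (k := k)
    (x := fun j ↦ choiceDigit j (c j)) (y := fun j ↦ choiceDigit j (c' j))
    fun i hi ↦ by rw [not_not.mp (Nat.find_min hex hi)]
  rw [abs_choiceDigit_sub k hk] at hsep
  have hpow : ((16 : ℝ) ^ n)⁻¹ ≤ ((16 : ℝ) ^ (k + 1))⁻¹ := by gcongr <;> norm_num; omega
  have hpos : (0 : ℝ) < ((16 : ℝ) ^ (k + 1))⁻¹ := by positivity
  rw [zpow_neg, zpow_natCast, pathPoint, pathPoint]
  push_cast at hsep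
  linarith

def extendWord {n : ℕ} (w : Fin n → Bool) : ℕ → Bool :=
  fun j ↦ if h : j < n then w ⟨j, h⟩ else true

lemma extendWord_injective {n : ℕ} : Function.Injective (extendWord (n := n)) :=
  fun w w' h ↦ funext fun i ↦ by simpa [extendWord] using congrFun h i

lemma extendWord_of_le {n : ℕ} (w : Fin n → Bool) {j : ℕ} (h : n ≤ j) : extendWord w j = true :=
  dif_neg (not_lt.mpr h)

/-- For `ε_n = 16^(-n)`, the minimal number of closed intervals of length `ε_n`
needed to cover `P_F` equals exactly `2^n`. -/
theorem stmt10 : ∀ n : ℕ, coverNum PF ((16 : ℝ) ^ (-(n : ℤ))) = 2 ^ n := by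
  intro n
  have hcover := PF_subset_biUnion_image_lEnd n
  refine le_antisymm
    ((coverNum_le_card hcover).trans (Finset.card_image_le.trans (card_words_le n))) ?_
  calc 2 ^ n = (Finset.univ : Finset (Fin n → Bool)).card := by simp
    _ ≤ coverNum PF _ :=
      le_coverNum_of_separated (f := fun w ↦ pathPoint (extendWord w)) ⟨_, hcover⟩
        (fun _ _ ↦ pathPoint_mem_PF _) fun w _ w' _ hne ↦
          pow_neg_lt_abs_pathPoint_sub (extendWord_injective.ne hne) fun j hj ↦ by
            rw [extendWord_of_le w hj, extendWord_of_le w' hj]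
end
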